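/- Let D be a strong digraph, X a set of three distinct vertices of D, and (W, S, Z) a 1-separation of (X, Y) for some triple Y of vertices, with S = {s}. Let D1 be the digraph obtained from D[W ∪ S] by adding the arc sw for every vertex w in W having an in-neighbour in Z. Then D contains an X-tripod if and only if D1 contains an X-tripod. -/

import Mathlib

/-!
Every arc of `D` entering `Z` leaves `s`. Hence deleting the `Z`-vertices from a dipath or
dicycle of `D` that starts outside `Z` gives a dipath or dicycle of `D₁`: each maximal run
through `Z` was entered from `s`, and the arc leaving it becomes an arc `s → w` of `D₁`.
Before deleting, a leg that ends in `Z` is cut at `s` (it passes through `s`, which then lies on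
the cycle), and the cycle is rotated so that its closing arc avoids `Z`; both steps rely on the
disjointness of the legs, which puts their ends at distinct vertices of the cycle.

Conversely, `D` being strong, an arc `s → w` of `D₁` coming from an arc `z → w` with `z ∈ Z`
is replaced by a dipath of `D` from `s` through `Z` to `z`, followed by `z → w`. Only the leg
through `s` picks up new vertices, all in `Z`, which the tripod of `D₁` avoids, so the legs
stay disjoint.
-/

open List

variable {V : Type*}

/-- The interior (internal vertices) of a path given as a list of vertices. -/
def interiorL (l : List V) : List V := l.tail.dropLast

/-- `l` is a directed path (dipath) in the digraph `D`. -/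
def IsDipath (D : V → V → Prop) (l : List V) : Prop :=
  l ≠ [] ∧ l.Chain' D ∧ l.Nodup

/-- `l` is a dipath from `x` to `y` in `D`. -/
def DipathFromTo (D : V → V → Prop) (l : List V) (x y : V) : Prop :=
  IsDipath D l ∧ l.head? = some x ∧ l.getLast? = some y

/-- `l` is a directed cycle in `D` (length at least 2, digraphs being strict). -/
def IsDicycle (D : V → V → Prop) (l : List V) : Prop :=
  2 ≤ l.length ∧ l.Nodup ∧ l.Chain' D ∧ ∃ a ∈ l.getLast?, ∃ b ∈ l.head?, D a b

/-- The restriction (induced subdigraph) of `D` to the vertex set `A`. -/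
def restrict (D : V → V → Prop) (A : Set V) : V → V → Prop :=
  fun u v => D u v ∧ u ∈ A ∧ v ∈ A

/-- Reachability by a dipath inside the vertex set `A`. -/
def ReachIn (D : V → V → Prop) (A : Set V) : V → V → Prop :=
  Relation.ReflTransGen (restrict D A)

/-- Reachability by a dipath. -/
def Reach (D : V → V → Prop) : V → V → Prop := Relation.ReflTransGen D

/-- `x` appears strictly before `y` along the list `l`. -/
def Before (l : List V) (x y : V) : Prop :=
  ∃ i j : ℕ, i < j ∧ l[i]? = some x ∧ l[j]? = some y

/-- `x` and `y` are consecutive (in this order) in `l`. -/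
def ConsecIn (l : List V) (x y : V) : Prop :=
  ∃ i : ℕ, l[i]? = some x ∧ l[i + 1]? = some y

/-- `D` contains a subdivision of `F`, realized by the branch-vertex map `branch` and,
for every arc `uv` of `F`, the dipath `P u v` from `branch u` to `branch v`;
the paths have length at least one and are internally disjoint from each other
and from the branch vertices. -/
def IsSubdivisionIn {W : Type*} (F : W → W → Prop) (D : V → V → Prop)
    (branch : W → V) (P : W → W → List V) : Prop :=
  Function.Injective branch ∧
  (∀ u v : W, F u v →
    DipathFromTo D (P u v) (branch u) (branch v) ∧ 2 ≤ (P u v).length) ∧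
  (∀ u v : W, F u v → ∀ x ∈ interiorL (P u v), ∀ w : W, x ≠ branch w) ∧
  (∀ u v u' v' : W, F u v → F u' v' → (u, v) ≠ (u', v') →
    ∀ x ∈ interiorL (P u v), x ∉ interiorL (P u' v'))

/-- `D` contains a subdivision of `F`. -/
def ContainsSubdivision {W : Type*} (F : W → W → Prop) (D : V → V → Prop) : Prop :=
  ∃ (branch : W → V) (P : W → W → List V), IsSubdivisionIn F D branch P

/-- An `{x1,x2,x3}`-tripod: a directed cycle `C` together with three pairwise disjoint
dipaths `P1, P2, P3` starting at `x1, x2, x3` respectively and ending on `C`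
(the paths may have length 0). -/
def IsTripod (D : V → V → Prop) (x1 x2 x3 : V) (C P1 P2 P3 : List V) : Prop :=
  IsDicycle D C ∧
  IsDipath D P1 ∧ IsDipath D P2 ∧ IsDipath D P3 ∧
  P1.head? = some x1 ∧ P2.head? = some x2 ∧ P3.head? = some x3 ∧
  (∀ a ∈ P1.getLast?, a ∈ C) ∧ (∀ a ∈ P2.getLast?, a ∈ C) ∧ (∀ a ∈ P3.getLast?, a ∈ C) ∧
  (∀ z, z ∈ P1 → z ∉ P2) ∧ (∀ z, z ∈ P1 → z ∉ P3) ∧ (∀ z, z ∈ P2 → z ∉ P3)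

/-- An unfolded tripod: each leg meets the cycle only in its terminal vertex and
meets `{x1,x2,x3}` only in its initial vertex. -/
def IsUnfoldedTripod (D : V → V → Prop) (x1 x2 x3 : V) (C P1 P2 P3 : List V) : Prop :=
  IsTripod D x1 x2 x3 C P1 P2 P3 ∧
  (∀ z ∈ P1, z ∈ C → P1.getLast? = some z) ∧
  (∀ z ∈ P2, z ∈ C → P2.getLast? = some z) ∧
  (∀ z ∈ P3, z ∈ C → P3.getLast? = some z) ∧
  (∀ z ∈ P1, (z = x1 ∨ z = x2 ∨ z = x3) → P1.head? = some z) ∧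
  (∀ z ∈ P2, (z = x1 ∨ z = x2 ∨ z = x3) → P2.head? = some z) ∧
  (∀ z ∈ P3, (z = x1 ∨ z = x2 ∨ z = x3) → P3.head? = some z)

theorem isDicycle_iff_cycleChain {R : V → V → Prop} {l : List V} :
    IsDicycle R l ↔ 2 ≤ l.length ∧ l.Nodup ∧ Cycle.Chain R (l : Cycle V) := by
  rcases l with _ | ⟨a, t⟩
  · simp [IsDicycle]
  · simp only [IsDicycle, Cycle.chain_coe_cons, ← cons_append, isChain_append, getLast?_cons,
      head?_cons, Option.mem_def, Option.some.injEq, exists_eq_left', forall_eq',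
      isChain_singleton, true_and]
    rfl

theorem IsDicycle.exists_rotation {R : V → V → Prop} {C : List V} (hC : IsDicycle R C) {a : V}
    (ha : a ∈ C) : ∃ B, IsDicycle R (a :: B) ∧ (a :: B) ~ C := by
  obtain ⟨A, B, rfl⟩ := append_of_mem ha
  have hrot : A ++ a :: B ~r a :: B ++ A := isRotated_append
  refine ⟨B ++ A, ?_, hrot.perm.symm⟩
  rw [isDicycle_iff_cycleChain] at hC ⊢
  exact ⟨hrot.perm.length_eq ▸ hC.1, hrot.nodup_iff.mp hC.2.1, Cycle.coe_eq_coe.mpr hrot ▸ hC.2.2⟩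

theorem IsDicycle.mem_of_mem_getLast? {R : V → V → Prop} {h e : V} {B : List V}
    (hC : IsDicycle R (h :: B)) (he : e ∈ (h :: B).getLast?) : e ∈ B := by
  have hB : B ≠ [] := by rintro rfl; simp [IsDicycle] at hC
  rw [getLast?_cons_of_ne_nil hB] at he
  exact List.mem_of_mem_getLast? he

theorem exists_nodup_isChain_cons_of_reflTransGen {R : V → V → Prop} {a b : V}
    (h : Relation.ReflTransGen R a b) :
    ∃ l, (a :: l).Nodup ∧ IsChain R (a :: l) ∧ (a :: l).getLast? = some b := by
  induction h using Relation.ReflTransGen.head_induction_on with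
  | refl => exact ⟨[], nodup_singleton b, .singleton b, rfl⟩
  | @head c d hcd _ ih =>
    obtain ⟨l, hnd, hch, hlast⟩ := ih
    by_cases hc : c ∈ d :: l
    · obtain ⟨A, T, hAT⟩ := append_of_mem hc
      have hsuf : c :: T <:+ d :: l := hAT ▸ suffix_append A (c :: T)
      refine ⟨T, hsuf.sublist.nodup hnd, hch.suffix hsuf, ?_⟩
      rwa [hAT, getLast?_append_of_ne_nil _ (cons_ne_nil c T)] at hlast
    · exact ⟨d :: l, nodup_cons.mpr ⟨hc, hnd⟩, hch.cons_cons hcd, hlast⟩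

theorem getLast?_filter_of_getLast?_eq {p : V → Bool} {l : List V} {a : V}
    (ha : l.getLast? = some a) (hpa : p a) : (l.filter p).getLast? = some a := by
  obtain ⟨l', rfl⟩ := getLast?_eq_some_iff.mp ha
  simp [filter_append, hpa]

/-- The digraph `D₁` of the statement. -/
def sepReduction (D : V → V → Prop) (W Z : Set V) (s : V) : V → V → Prop :=
  fun u v => restrict D (W ∪ {s}) u v ∨ (u = s ∧ v ∈ W ∧ ∃ z ∈ Z, D z v)

section Separation

open Classical

variable {D : V → V → Prop} {W Z : Set V} {s : V}

theorem mem_union_of_notMem (hcover : W ∪ {s} ∪ Z = Set.univ) {v : V} (hv : v ∉ Z) :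
    v ∈ W ∪ {s} := by
  have : v ∈ W ∪ {s} ∪ Z := hcover ▸ Set.mem_univ v
  exact this.resolve_right hv

theorem notMem_of_mem_union (hsZ : s ∉ Z) (hWZ : W ∩ Z = ∅) {v : V} (hv : v ∈ W ∪ {s}) :
    v ∉ Z := by
  rintro hvZ
  rcases hv with hvW | rfl
  exacts [(Set.eq_empty_iff_forall_notMem.mp hWZ v) ⟨hvW, hvZ⟩, hsZ hvZ]

theorem eq_of_rel_of_notMem_of_mem (hcover : W ∪ {s} ∪ Z = Set.univ)
    (hnoarc : ∀ u ∈ W, ∀ v ∈ Z, ¬ D u v) {u v : V} (h : D u v) (hu : u ∉ Z) (hv : v ∈ Z) :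
    u = s :=
  (mem_union_of_notMem hcover hu).resolve_left fun huW => hnoarc u huW v hv h

theorem sep_mem_of_isChain (hcover : W ∪ {s} ∪ Z = Set.univ)
    (hnoarc : ∀ u ∈ W, ∀ v ∈ Z, ¬ D u v) :
    ∀ {L : List V} {u z : V}, IsChain D L → u ∈ L.head? → u ∉ Z → z ∈ L → z ∈ Z → s ∈ L
  | [], _, _, _, hu, _, _, _ => by simp at hu
  | [a], _, _, _, hu, huZ, hz, hzZ => by simp_all
  | a :: b :: t, u, z, hL, hu, huZ, hz, hzZ => by
    obtain rfl : a = u := by simpa using hu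
    obtain ⟨hab, hbt⟩ := isChain_cons_cons.mp hL
    by_cases hb : b ∈ Z
    · exact eq_of_rel_of_notMem_of_mem hcover hnoarc hab huZ hb ▸ mem_cons_self
    · have hzbt : z ∈ b :: t := (mem_cons.mp hz).resolve_left fun h => huZ (h ▸ hzZ)
      exact mem_cons_of_mem a (sep_mem_of_isChain hcover hnoarc hbt rfl hb hzbt hzZ)

theorem IsDicycle.sep_mem (hcover : W ∪ {s} ∪ Z = Set.univ)
    (hnoarc : ∀ u ∈ W, ∀ v ∈ Z, ¬ D u v) {C : List V} (hC : IsDicycle D C) {u z : V}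
    (hu : u ∈ C) (huZ : u ∉ Z) (hz : z ∈ C) (hzZ : z ∈ Z) : s ∈ C := by
  obtain ⟨B, hB, hperm⟩ := hC.exists_rotation hu
  exact hperm.mem_iff.mp
    (sep_mem_of_isChain hcover hnoarc hB.2.2.1 rfl huZ (hperm.mem_iff.mpr hz) hzZ)

theorem isChain_sepReduction_cons_filter (hcover : W ∪ {s} ∪ Z = Set.univ)
    (hnoarc : ∀ u ∈ W, ∀ v ∈ Z, ¬ D u v) :
    ∀ {L : List V} {p q : V}, IsChain D (q :: L) → (p :: L).Nodup → p ∉ Z →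
      (q = p ∨ q ∈ Z ∧ p = s) → IsChain (sepReduction D W Z s) (p :: L.filter (· ∉ Z))
  -- `p` is the last vertex kept and `q` the last one read: either `q = p`, or `q` lies on a run
  -- through `Z`, which can only have been entered from `p = s`.
  | [], _, _, _, _, _, _ => .singleton _
  | a :: t, p, q, hL, hnd, hp, hq => by
    obtain ⟨hqa, ht⟩ := isChain_cons_cons.mp hL
    have hpa : p ≠ a := fun h => (nodup_cons.mp hnd).1 (h ▸ mem_cons_self)
    by_cases ha : a ∈ Z
    · rw [filter_cons_of_neg (by simpa using ha)]
      refine isChain_sepReduction_cons_filter hcover hnoarc ht ?_ hp (Or.inr ⟨ha, ?_⟩)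
      · exact hnd.sublist ((sublist_cons_self a t).cons_cons p)
      · rcases hq with rfl | ⟨-, hps⟩
        exacts [eq_of_rel_of_notMem_of_mem hcover hnoarc hqa hp ha, hps]
    · rw [filter_cons_of_pos (by simpa using ha)]
      refine .cons_cons ?_ (isChain_sepReduction_cons_filter hcover hnoarc ht
        (nodup_cons.mp hnd).2 ha (Or.inl rfl))
      rcases hq with rfl | ⟨hqZ, rfl⟩
      · exact Or.inl ⟨hqa, mem_union_of_notMem hcover hp, mem_union_of_notMem hcover ha⟩
      · exact Or.inr ⟨rfl, (mem_union_of_notMem hcover ha).resolve_right hpa.symm, q, hqZ, hqa⟩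

theorem IsDipath.filter_sepReduction (hcover : W ∪ {s} ∪ Z = Set.univ)
    (hnoarc : ∀ u ∈ W, ∀ v ∈ Z, ¬ D u v) {P : List V} (hP : IsDipath D P) {x : V}
    (hx : P.head? = some x) (hxZ : x ∉ Z) :
    IsDipath (sepReduction D W Z s) (P.filter (· ∉ Z)) ∧ (P.filter (· ∉ Z)).head? = some x := by
  obtain ⟨t, rfl⟩ : ∃ t, P = x :: t := by
    rcases P with _ | ⟨a, t⟩ <;> simp_all
  rw [filter_cons_of_pos (by simpa using hxZ)]
  exact ⟨⟨cons_ne_nil _ _, isChain_sepReduction_cons_filter hcover hnoarc hP.2.1 hP.2.2 hxZ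
    (Or.inl rfl), (filter_sublist.cons_cons x).nodup hP.2.2⟩, rfl⟩

theorem IsDipath.exists_prefix_getLast?_notMem (hsZ : s ∉ Z) (hcover : W ∪ {s} ∪ Z = Set.univ)
    (hnoarc : ∀ u ∈ W, ∀ v ∈ Z, ¬ D u v) {C : List V} (hC : IsDicycle D C)
    (hCZ : ∃ u ∈ C, u ∉ Z) {P : List V} (hP : IsDipath D P) {x : V} (hx : P.head? = some x)
    (hxZ : x ∉ Z) (hlast : ∀ a ∈ P.getLast?, a ∈ C) :
    ∃ P', P' <+: P ∧ P'.head? = some x ∧ ∃ a ∈ P'.getLast?, a ∈ C ∧ a ∉ Z := by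
  obtain ⟨a, ha⟩ : ∃ a, P.getLast? = some a := Option.isSome_iff_exists.mp
    (getLast?_isSome.mpr hP.1)
  by_cases haZ : a ∈ Z
  · obtain ⟨u, hu, huZ⟩ := hCZ
    have hsP : s ∈ P :=
      sep_mem_of_isChain hcover hnoarc hP.2.1 hx hxZ (List.mem_of_mem_getLast? ha) haZ
    have hsC : s ∈ C := hC.sep_mem hcover hnoarc hu huZ (hlast a ha) haZ
    obtain ⟨A, T, rfl⟩ := append_of_mem hsP
    refine ⟨A ++ [s], ⟨T, by simp⟩, ?_, s, by simp, hsC, hsZ⟩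
    simpa [head?_append] using hx
  · exact ⟨P, prefix_refl P, hx, a, ha, hlast a ha, haZ⟩

theorem IsDipath.exists_leg_sepReduction (hsZ : s ∉ Z) (hcover : W ∪ {s} ∪ Z = Set.univ)
    (hnoarc : ∀ u ∈ W, ∀ v ∈ Z, ¬ D u v) {C : List V} (hC : IsDicycle D C)
    (hCZ : ∃ u ∈ C, u ∉ Z) {P : List V} (hP : IsDipath D P) {x : V} (hx : P.head? = some x)
    (hxZ : x ∉ Z) (hlast : ∀ a ∈ P.getLast?, a ∈ C) :
    ∃ L, IsDipath (sepReduction D W Z s) L ∧ L.head? = some x ∧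
      (∃ a ∈ L.getLast?, a ∈ C ∧ a ∉ Z) ∧ ∀ v ∈ L, v ∈ P := by
  obtain ⟨P', hpre, hx', a, ha, haC, haZ⟩ :=
    hP.exists_prefix_getLast?_notMem hsZ hcover hnoarc hC hCZ hx hxZ hlast
  have hP' : IsDipath D P' :=
    ⟨ne_nil_of_mem (List.mem_of_mem_getLast? ha), hP.2.1.prefix hpre, hpre.sublist.nodup hP.2.2⟩
  obtain ⟨hL, hLx⟩ := hP'.filter_sepReduction hcover hnoarc hx' hxZ
  exact ⟨_, hL, hLx, ⟨a, getLast?_filter_of_getLast?_eq ha (by simpa using haZ), haC, haZ⟩,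
    fun v hv => hpre.subset (mem_filter.mp hv).1⟩

theorem IsDicycle.exists_rotation_ends_notMem (hsZ : s ∉ Z) (hcover : W ∪ {s} ∪ Z = Set.univ)
    (hnoarc : ∀ u ∈ W, ∀ v ∈ Z, ¬ D u v) {C : List V} (hC : IsDicycle D C) {u v : V}
    (hu : u ∈ C) (hv : v ∈ C) (huv : u ≠ v) (huZ : u ∉ Z) (hvZ : v ∉ Z) :
    ∃ h B, IsDicycle D (h :: B) ∧ (h :: B) ~ C ∧ h ∉ Z ∧ ∀ e ∈ (h :: B).getLast?, e ∉ Z := by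
  by_cases hs : s ∈ C
  · obtain ⟨B, hB, hperm⟩ := hC.exists_rotation hs
    refine ⟨s, B, hB, hperm, hsZ, fun e he heZ => ?_⟩
    obtain ⟨w, hw, hwZ, hws⟩ : ∃ w ∈ C, w ∉ Z ∧ w ≠ s := by
      by_cases hus : u = s
      exacts [⟨v, hv, hvZ, hus ▸ huv.symm⟩, ⟨u, hu, huZ, hus⟩]
    have hwB : w ∈ B := (mem_cons.mp (hperm.mem_iff.mpr hw)).resolve_left hws
    obtain ⟨B₁, B₂, rfl⟩ := append_of_mem hwB
    have hsuf : w :: B₂ <:+ s :: (B₁ ++ w :: B₂) := suffix_append (s :: B₁) (w :: B₂)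
    have heB₂ : e ∈ w :: B₂ := List.mem_of_mem_getLast? <| by
      rwa [← cons_append, getLast?_append_of_ne_nil _ (cons_ne_nil w B₂)] at he
    have hsB₂ := sep_mem_of_isChain hcover hnoarc (hB.2.2.1.suffix hsuf) rfl hwZ heB₂ heZ
    exact (nodup_cons.mp hB.2.1).1 (mem_append_right B₁ hsB₂)
  · obtain ⟨B, hB, hperm⟩ := hC.exists_rotation hu
    refine ⟨u, B, hB, hperm, huZ, fun e he heZ => hs ?_⟩
    exact hC.sep_mem hcover hnoarc hu huZ (hperm.mem_iff.mp (List.mem_of_mem_getLast? he)) heZ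

theorem IsDicycle.exists_sepReduction (hsZ : s ∉ Z) (hcover : W ∪ {s} ∪ Z = Set.univ)
    (hnoarc : ∀ u ∈ W, ∀ v ∈ Z, ¬ D u v) {C : List V} (hC : IsDicycle D C) {u v : V}
    (hu : u ∈ C) (hv : v ∈ C) (huv : u ≠ v) (huZ : u ∉ Z) (hvZ : v ∉ Z) :
    ∃ C', IsDicycle (sepReduction D W Z s) C' ∧ ∀ w ∈ C, w ∉ Z → w ∈ C' := by
  obtain ⟨h, B, hB, hperm, hhZ, heZ⟩ :=
    hC.exists_rotation_ends_notMem hsZ hcover hnoarc hu hv huv huZ hvZ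
  obtain ⟨-, hnd, hch, e, he, h', hh', hrel⟩ := id hB
  obtain rfl : h = h' := Option.some.inj hh'
  obtain ⟨hL, hLh⟩ :=
    IsDipath.filter_sepReduction hcover hnoarc ⟨cons_ne_nil h B, hch, hnd⟩ rfl hhZ
  have heZ' := heZ e he
  have hlen : 2 ≤ ((h :: B).filter (· ∉ Z)).length := by
    have heB : e ∈ B.filter (· ∉ Z) :=
      mem_filter.mpr ⟨hB.mem_of_mem_getLast? he, by simpa using heZ'⟩
    rw [filter_cons_of_pos (by simpa using hhZ), length_cons]
    exact Nat.succ_le_succ (length_pos_of_mem heB)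
  refine ⟨_, ⟨hlen, hL.2.2, hL.2.1, e, getLast?_filter_of_getLast?_eq he (by simpa using heZ'), h,
    hLh, Or.inl ⟨hrel, mem_union_of_notMem hcover heZ', mem_union_of_notMem hcover hhZ⟩⟩,
    fun w hw hwZ => mem_filter.mpr ⟨hperm.mem_iff.mpr hw, by simpa using hwZ⟩⟩

theorem IsTripod.exists_sepReduction (hsZ : s ∉ Z) (hcover : W ∪ {s} ∪ Z = Set.univ)
    (hnoarc : ∀ u ∈ W, ∀ v ∈ Z, ¬ D u v) {x1 x2 x3 : V} (hx1 : x1 ∉ Z) (hx2 : x2 ∉ Z)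
    (hx3 : x3 ∉ Z) {C P1 P2 P3 : List V} (hT : IsTripod D x1 x2 x3 C P1 P2 P3) :
    ∃ C' P1' P2' P3', IsTripod (sepReduction D W Z s) x1 x2 x3 C' P1' P2' P3' := by
  obtain ⟨hC, hP1, hP2, hP3, hh1, hh2, hh3, hl1, hl2, hl3, hd12, hd13, hd23⟩ := hT
  have hCZ : ∃ u ∈ C, u ∉ Z := by
    by_contra! hCZ
    have hsP : ∀ {P x}, IsDipath D P → P.head? = some x → x ∉ Z →
        (∀ a ∈ P.getLast?, a ∈ C) → s ∈ P := fun hP hx hxZ hl =>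
      sep_mem_of_isChain hcover hnoarc hP.2.1 hx hxZ (getLast_mem hP.1)
        (hCZ _ (hl _ (getLast?_eq_some_getLast hP.1)))
    exact hd12 s (hsP hP1 hh1 hx1 hl1) (hsP hP2 hh2 hx2 hl2)
  obtain ⟨L1, hL1, hL1h, ⟨a1, ha1, ha1C, ha1Z⟩, hL1P⟩ :=
    hP1.exists_leg_sepReduction hsZ hcover hnoarc hC hCZ hh1 hx1 hl1
  obtain ⟨L2, hL2, hL2h, ⟨a2, ha2, ha2C, ha2Z⟩, hL2P⟩ :=
    hP2.exists_leg_sepReduction hsZ hcover hnoarc hC hCZ hh2 hx2 hl2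
  obtain ⟨L3, hL3, hL3h, ⟨a3, ha3, ha3C, ha3Z⟩, hL3P⟩ :=
    hP3.exists_leg_sepReduction hsZ hcover hnoarc hC hCZ hh3 hx3 hl3
  have ha12 : a1 ≠ a2 := fun h => hd12 a1 (hL1P a1 (List.mem_of_mem_getLast? ha1))
    (hL2P a1 (h ▸ List.mem_of_mem_getLast? ha2))
  obtain ⟨C', hC', hCC'⟩ := hC.exists_sepReduction hsZ hcover hnoarc ha1C ha2C ha12 ha1Z ha2Z
  refine ⟨C', L1, L2, L3, hC', hL1, hL2, hL3, hL1h, hL2h, hL3h, ?_, ?_, ?_,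
    fun v h1 h2 => hd12 v (hL1P v h1) (hL2P v h2), fun v h1 h3 => hd13 v (hL1P v h1) (hL3P v h3),
    fun v h2 h3 => hd23 v (hL2P v h2) (hL3P v h3)⟩
  · exact fun a ha => Option.mem_unique ha1 ha ▸ hCC' a1 ha1C ha1Z
  · exact fun a ha => Option.mem_unique ha2 ha ▸ hCC' a2 ha2C ha2Z
  · exact fun a ha => Option.mem_unique ha3 ha ▸ hCC' a3 ha3C ha3Z

theorem sepReduction.rel_of_ne {u v : V} (h : sepReduction D W Z s u v) (hu : u ≠ s) : D u v := by
  rcases h with ⟨h, -⟩ | ⟨rfl, -⟩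
  exacts [h, absurd rfl hu]

theorem sepReduction.notMem_right (hsZ : s ∉ Z) (hWZ : W ∩ Z = ∅) {u v : V}
    (h : sepReduction D W Z s u v) : v ∉ Z := by
  refine notMem_of_mem_union hsZ hWZ ?_
  rcases h with ⟨-, -, hv⟩ | ⟨-, hv, -⟩
  exacts [hv, Or.inl hv]

theorem forall_notMem_of_isChain_sepReduction (hsZ : s ∉ Z) (hWZ : W ∩ Z = ∅) {L : List V}
    (hL : IsChain (sepReduction D W Z s) L) (hhead : ∀ a ∈ L.head?, a ∉ Z) : ∀ v ∈ L, v ∉ Z :=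
  hL.induction _ _ (fun _ _ h _ => h.notMem_right hsZ hWZ)
    fun hne => hhead _ (head?_eq_some_head hne)

theorem isChain_of_isChain_sepReduction {L : List V} (hL : IsChain (sepReduction D W Z s) L)
    (hs : s ∉ L) : IsChain D L :=
  hL.imp_of_mem_imp fun _ _ ha _ h => h.rel_of_ne fun has => hs (has ▸ ha)

theorem isChain_append_singleton_of_sepReduction {A T : List V}
    (h : IsChain (sepReduction D W Z s) (A ++ s :: T)) (hsA : s ∉ A) : IsChain D (A ++ [s]) := by
  obtain ⟨hA, -, hAs⟩ := isChain_append.mp h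
  refine (isChain_of_isChain_sepReduction hA hsA).append (.singleton s) fun a ha b hb => ?_
  obtain rfl : s = b := Option.some.inj hb
  exact (hAs a ha s rfl).rel_of_ne fun has => hsA (has ▸ List.mem_of_mem_getLast? ha)

theorem exists_rel_reachIn_of_reflTransGen (hcover : W ∪ {s} ∪ Z = Set.univ)
    (hnoarc : ∀ u ∈ W, ∀ v ∈ Z, ¬ D u v) {u z : V} (h : Relation.ReflTransGen D u z)
    (hz : z ∈ Z) : (u ∈ Z ∧ ReachIn D Z u z) ∨ ∃ z₀ ∈ Z, D s z₀ ∧ ReachIn D Z z₀ z := by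
  induction h using Relation.ReflTransGen.head_induction_on with
  | refl => exact Or.inl ⟨hz, .refl⟩
  | @head u v huv _ ih =>
    rcases ih with ⟨hvZ, hv⟩ | h
    · by_cases huZ : u ∈ Z
      · exact Or.inl ⟨huZ, .head ⟨huv, huZ, hvZ⟩ hv⟩
      · exact Or.inr ⟨v, hvZ, eq_of_rel_of_notMem_of_mem hcover hnoarc huv huZ hvZ ▸ huv, hv⟩
    · exact Or.inr h

theorem sepReduction.exists_detour (hsZ : s ∉ Z) (hcover : W ∪ {s} ∪ Z = Set.univ)
    (hnoarc : ∀ u ∈ W, ∀ v ∈ Z, ¬ D u v) (hstrong : ∀ u v : V, Reach D u v) {b : V}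
    (h : sepReduction D W Z s s b) :
    ∃ m : List V, (∀ v ∈ m, v ∈ Z) ∧ m.Nodup ∧ IsChain D (s :: m ++ [b]) := by
  rcases h with ⟨h, -⟩ | ⟨-, -, z, hz, hzb⟩
  · exact ⟨[], by simp, nodup_nil, isChain_pair.mpr h⟩
  obtain ⟨hsZ', -⟩ | ⟨z₀, hz₀, hsz₀, hz₀z⟩ :=
    exists_rel_reachIn_of_reflTransGen hcover hnoarc (hstrong s z) hz
  · exact absurd hsZ' hsZ
  obtain ⟨l, hnd, hch, hlast⟩ := exists_nodup_isChain_cons_of_reflTransGen hz₀z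
  have hlZ : ∀ v ∈ z₀ :: l, v ∈ Z := hch.induction _ _ (fun _ _ h _ => h.2.2) fun _ => hz₀
  refine ⟨z₀ :: l, hlZ, hnd, IsChain.append ((hch.imp fun _ _ h => h.1).cons_cons hsz₀)
    (.singleton b) ?_⟩
  simp only [getLast?_cons_cons, hlast, Option.mem_def, Option.some.injEq, head?_cons]
  rintro _ rfl _ rfl
  exact hzb

theorem IsDipath.exists_of_sepReduction (hsZ : s ∉ Z) (hcover : W ∪ {s} ∪ Z = Set.univ)
    (hnoarc : ∀ u ∈ W, ∀ v ∈ Z, ¬ D u v) (hstrong : ∀ u v : V, Reach D u v) {L : List V}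
    (hL : IsDipath (sepReduction D W Z s) L) (hLZ : ∀ v ∈ L, v ∉ Z) :
    ∃ L', IsDipath D L' ∧ L'.head? = L.head? ∧ L'.getLast? = L.getLast? ∧ L ⊆ L' ∧
      ∀ v ∈ L', v ∈ L ∨ v ∈ Z ∧ s ∈ L := by
  obtain ⟨hne, hch, hnd⟩ := hL
  by_cases hs : s ∈ L
  swap
  · exact ⟨L, ⟨hne, isChain_of_isChain_sepReduction hch hs, hnd⟩, rfl, rfl, Subset.refl L,
      fun v hv => Or.inl hv⟩
  obtain ⟨A, T, rfl⟩ := append_of_mem hs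
  obtain ⟨hsAT, -⟩ := nodup_cons.mp (nodup_middle.mp hnd)
  have hAs' : IsChain D (A ++ [s]) :=
    isChain_append_singleton_of_sepReduction hch fun h => hsAT (mem_append_left T h)
  rcases T with _ | ⟨b, T⟩
  · exact ⟨A ++ [s], ⟨hne, hAs', hnd⟩, rfl, rfl, Subset.refl _, fun v hv => Or.inl hv⟩
  obtain ⟨hsb, hbT⟩ := isChain_cons_cons.mp hch.right_of_append
  obtain ⟨m, hmZ, hmnd, hm⟩ := hsb.exists_detour hsZ hcover hnoarc hstrong
  have hbT' : IsChain D (b :: T) :=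
    isChain_of_isChain_sepReduction hbT fun h => hsAT (mem_append_right A h)
  have hchain : IsChain D (A ++ [s] ++ (m ++ b :: T)) := by
    refine hAs'.append_overlap ?_ (cons_ne_nil s [])
    simpa using hm.append_overlap (l₃ := T) (by simpa using hbT') (cons_ne_nil b [])
  have hperm : A ++ [s] ++ (m ++ b :: T) ~ (A ++ s :: b :: T) ++ m := by
    simpa using (perm_append_comm (l₁ := m) (l₂ := b :: T)).append_left (A ++ [s])
  refine ⟨A ++ [s] ++ (m ++ b :: T), ⟨by simp, hchain, hperm.nodup_iff.mpr ?_⟩, by simp, ?_,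
    fun v hv => hperm.symm.subset (mem_append_left m hv), fun v hv => ?_⟩
  · exact nodup_append.mpr ⟨hnd, hmnd, fun a ha b hb hab => hLZ a ha (hab ▸ hmZ b hb)⟩
  · rw [getLast?_append_of_ne_nil _ (by simp), getLast?_append_of_ne_nil _ (cons_ne_nil b T),
      getLast?_append_of_ne_nil _ (cons_ne_nil s _), getLast?_cons_cons]
  · rcases mem_append.mp (hperm.subset hv) with hv | hv
    exacts [Or.inl hv, Or.inr ⟨hmZ v hv, hs⟩]

theorem IsDicycle.exists_of_sepReduction (hsZ : s ∉ Z) (hcover : W ∪ {s} ∪ Z = Set.univ)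
    (hnoarc : ∀ u ∈ W, ∀ v ∈ Z, ¬ D u v) (hstrong : ∀ u v : V, Reach D u v) {C : List V}
    (hC : IsDicycle (sepReduction D W Z s) C) (hCZ : ∀ v ∈ C, v ∉ Z) :
    ∃ C', IsDicycle D C' ∧ C ⊆ C' := by
  -- Starting the cycle at `s` keeps the closing arc, the only one not spliced, out of `s`.
  obtain ⟨h, hh, hhs⟩ : ∃ h ∈ C, s ∈ C → h = s := by
    by_cases hs : s ∈ C
    · exact ⟨s, hs, fun _ => rfl⟩
    · have hne : C ≠ [] := by rintro rfl; simp [IsDicycle] at hC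
      exact ⟨C.head hne, head_mem hne, fun h => absurd h hs⟩
  obtain ⟨B, hB, hperm⟩ := hC.exists_rotation hh
  obtain ⟨hlen, hnd, hch, e, he, h', hh', hrel⟩ := id hB
  obtain rfl : h = h' := Option.some.inj hh'
  obtain ⟨L, hL, hLh, hLl, hsub, -⟩ := IsDipath.exists_of_sepReduction hsZ hcover hnoarc hstrong
    ⟨cons_ne_nil h B, hch, hnd⟩ fun v hv => hCZ v (hperm.mem_iff.mp hv)
  have hes : e ≠ s := by
    rintro rfl
    have heB := hB.mem_of_mem_getLast? he
    exact (nodup_cons.mp hnd).1 (hhs (hperm.mem_iff.mp (mem_cons_of_mem h heB)) ▸ heB)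
  refine ⟨L, ⟨(hnd.subperm hsub).length_le.trans' hlen, hL.2.2, hL.2.1, e, hLl ▸ he, h, hLh,
    hrel.rel_of_ne hes⟩, fun v hv => hsub (hperm.mem_iff.mpr hv)⟩

theorem IsTripod.exists_of_sepReduction (hsZ : s ∉ Z) (hWZ : W ∩ Z = ∅)
    (hcover : W ∪ {s} ∪ Z = Set.univ) (hnoarc : ∀ u ∈ W, ∀ v ∈ Z, ¬ D u v)
    (hstrong : ∀ u v : V, Reach D u v) {x1 x2 x3 : V} (hx1 : x1 ∉ Z) (hx2 : x2 ∉ Z)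
    (hx3 : x3 ∉ Z) {C P1 P2 P3 : List V}
    (hT : IsTripod (sepReduction D W Z s) x1 x2 x3 C P1 P2 P3) :
    ∃ C' P1' P2' P3', IsTripod D x1 x2 x3 C' P1' P2' P3' := by
  obtain ⟨hC, hP1, hP2, hP3, hh1, hh2, hh3, hl1, hl2, hl3, hd12, hd13, hd23⟩ := hT
  have hlegZ : ∀ {P x}, IsDipath (sepReduction D W Z s) P → P.head? = some x → x ∉ Z →
      ∀ v ∈ P, v ∉ Z := fun hP hx hxZ =>
    forall_notMem_of_isChain_sepReduction hsZ hWZ hP.2.1 fun a ha =>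
      Option.some.inj (hx ▸ ha) ▸ hxZ
  obtain ⟨-, -, hCch, e, -, h, hh, hrel⟩ := id hC
  obtain ⟨C', hC', hCC'⟩ := hC.exists_of_sepReduction hsZ hcover hnoarc hstrong
    (forall_notMem_of_isChain_sepReduction hsZ hWZ hCch fun a ha =>
      Option.mem_unique hh ha ▸ hrel.notMem_right hsZ hWZ)
  have hP1Z := hlegZ hP1 hh1 hx1
  have hP2Z := hlegZ hP2 hh2 hx2
  have hP3Z := hlegZ hP3 hh3 hx3
  obtain ⟨L1, hL1, hL1h, hL1l, -, hL1P⟩ :=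
    hP1.exists_of_sepReduction hsZ hcover hnoarc hstrong hP1Z
  obtain ⟨L2, hL2, hL2h, hL2l, -, hL2P⟩ :=
    hP2.exists_of_sepReduction hsZ hcover hnoarc hstrong hP2Z
  obtain ⟨L3, hL3, hL3h, hL3l, -, hL3P⟩ :=
    hP3.exists_of_sepReduction hsZ hcover hnoarc hstrong hP3Z
  have hdisj : ∀ {P Q L M : List V}, (∀ v ∈ P, v ∉ Z) → (∀ v ∈ Q, v ∉ Z) → (∀ v ∈ P, v ∉ Q) →
      (∀ v ∈ L, v ∈ P ∨ v ∈ Z ∧ s ∈ P) → (∀ v ∈ M, v ∈ Q ∨ v ∈ Z ∧ s ∈ Q) →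
      ∀ v ∈ L, v ∉ M := by
    intro P Q L M hPZ hQZ hPQ hLP hMQ v hvL hvM
    rcases hLP v hvL with hvP | ⟨hvZ, hsP⟩ <;> rcases hMQ v hvM with hvQ | ⟨hvZ', hsQ⟩
    exacts [hPQ v hvP hvQ, hPZ v hvP hvZ', hQZ v hvQ hvZ, hPQ s hsP hsQ]
  refine ⟨C', L1, L2, L3, hC', hL1, hL2, hL3, hL1h ▸ hh1, hL2h ▸ hh2, hL3h ▸ hh3,
    fun a ha => hCC' (hl1 a (hL1l ▸ ha)), fun a ha => hCC' (hl2 a (hL2l ▸ ha)),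
    fun a ha => hCC' (hl3 a (hL3l ▸ ha)), hdisj hP1Z hP2Z hd12 hL1P hL2P,
    hdisj hP1Z hP3Z hd13 hL1P hL3P, hdisj hP2Z hP3Z hd23 hL2P hL3P⟩

end Separation

theorem tripod_one_separation (D : V → V → Prop)
    (hstrong : ∀ u v : V, Reach D u v)
    (W Z : Set V) (s : V)
    (hsZ : s ∉ Z) (hWZ : W ∩ Z = ∅)
    (hcover : W ∪ {s} ∪ Z = Set.univ)
    (x1 x2 x3 : V)
    (hX : ({x1, x2, x3} : Set V) ⊆ W ∪ {s})
    (hnoarc : ∀ u ∈ W, ∀ v ∈ Z, ¬ D u v) :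
    (∃ C P1 P2 P3 : List V, IsTripod D x1 x2 x3 C P1 P2 P3) ↔
    (∃ C P1 P2 P3 : List V,
      IsTripod (fun u v =>
          restrict D (W ∪ {s}) u v ∨ (u = s ∧ v ∈ W ∧ ∃ z ∈ Z, D z v))
        x1 x2 x3 C P1 P2 P3) := by
  have hx1 : x1 ∉ Z := notMem_of_mem_union hsZ hWZ (hX (by simp))
  have hx2 : x2 ∉ Z := notMem_of_mem_union hsZ hWZ (hX (by simp))
  have hx3 : x3 ∉ Z := notMem_of_mem_union hsZ hWZ (hX (by simp))
  constructor
  · rintro ⟨C, P1, P2, P3, hT⟩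
    exact hT.exists_sepReduction hsZ hcover hnoarc hx1 hx2 hx3
  · rintro ⟨C, P1, P2, P3, hT⟩
    exact hT.exists_of_sepReduction hsZ hWZ hcover hnoarc hstrong hx1 hx2 hx3
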